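/- arXiv:2202.06582 — 2 statements merged into one kernel-verified Lean document; each statement's English description precedes it below -/
import Mathlib

section
/- Let Δ be a 3-dimensional normal pseudomanifold with G(Δ) = G(st(t, Δ)) for some vertex t, and let v ≠ t be any vertex. Then the subcomplex lk(v, Δ) − {σ ∈ lk(v, Δ) : t ∈ σ} (the link of v with the open star of t removed) contains no interior vertex; i.e., every vertex of this 2-dimensional complex lies on its boundary. -/
open Finset

/-- An abstract simplicial complex on vertex type `V`, given by its finite set of
(nonempty) faces, closed under taking nonempty subsets. -/
structure SComplex (V : Type) [DecidableEq V] where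
  faces : Finset (Finset V)
  nonempty_of_mem : ∀ σ ∈ faces, σ.Nonempty
  down_closed : ∀ σ ∈ faces, ∀ τ ⊆ σ, τ.Nonempty → τ ∈ faces

namespace SComplex

variable {V : Type} [DecidableEq V]

/-- the number `f_k` of `k`-dimensional faces -/
def fNum (K : SComplex V) (k : ℕ) : ℕ := (K.faces.filter fun σ => σ.card = k + 1).card

/-- `g₂` of a `d`-dimensional complex: `f₁ - (d+1) f₀ + C(d+2,2)` -/
def g2 (K : SComplex V) (d : ℕ) : ℤ :=
  (K.fNum 1 : ℤ) - (d + 1) * (K.fNum 0 : ℤ) + (Nat.choose (d + 2) 2 : ℤ)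

/-- the vertex set of a complex -/
def vertices (K : SComplex V) : Finset V := K.faces.sup id

/-- the link of a face `σ` -/
def link (K : SComplex V) (σ : Finset V) : SComplex V where
  faces := K.faces.filter fun τ => σ ∩ τ = ∅ ∧ σ ∪ τ ∈ K.faces
  nonempty_of_mem τ hτ := K.nonempty_of_mem τ (mem_filter.mp hτ).1
  down_closed := by
    intro τ hτ ρ hρ hne
    rw [mem_filter] at hτ ⊢
    obtain ⟨h1, h2, h3⟩ := hτ
    refine ⟨K.down_closed τ h1 ρ hρ hne, subset_empty.mp ?_, 
      K.down_closed _ h3 _ (union_subset_union Subset.rfl hρ) ?_⟩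
    · exact h2 ▸ inter_subset_inter Subset.rfl hρ
    · obtain ⟨w, hw⟩ := hne
      exact ⟨w, mem_union_right _ hw⟩

/-- the (closed) star of a vertex `t` -/
def star (K : SComplex V) (t : V) : SComplex V where
  faces := K.faces.filter fun τ => insert t τ ∈ K.faces
  nonempty_of_mem τ hτ := K.nonempty_of_mem τ (mem_filter.mp hτ).1
  down_closed := by
    intro τ hτ ρ hρ hne
    rw [mem_filter] at hτ ⊢
    exact ⟨K.down_closed τ hτ.1 ρ hρ hne,
      K.down_closed _ hτ.2 _ (insert_subset_insert _ hρ) (insert_nonempty _ _)⟩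

/-- connectivity of a complex (through edges) -/
def Connected (K : SComplex V) : Prop :=
  ∀ u ∈ K.vertices, ∀ w ∈ K.vertices,
    Relation.ReflTransGen (fun a b => ({a, b} : Finset V) ∈ K.faces) u w

/-- purity: every face is contained in a `d`-dimensional face -/
def Pure (K : SComplex V) (d : ℕ) : Prop :=
  ∀ σ ∈ K.faces, ∃ τ ∈ K.faces, σ ⊆ τ ∧ τ.card = d + 1

/-- strong connectivity through facets sharing `(d-1)`-faces -/
def StronglyConnected (K : SComplex V) (d : ℕ) : Prop :=
  ∀ σ ∈ K.faces, ∀ τ ∈ K.faces, σ.card = d + 1 → τ.card = d + 1 →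
    Relation.ReflTransGen
      (fun a b => a ∈ K.faces ∧ b ∈ K.faces ∧ a.card = d + 1 ∧ b.card = d + 1 ∧ (a ∩ b).card = d)
      σ τ

/-- `K` is a `d`-dimensional pseudomanifold -/
def IsPseudomanifold (K : SComplex V) (d : ℕ) : Prop :=
  K.Pure d ∧
  (∀ σ ∈ K.faces, σ.card = d →
    (K.faces.filter fun τ => σ ⊆ τ ∧ τ.card = d + 1).card = 2) ∧
  K.StronglyConnected d

/-- `K` is a `d`-dimensional normal pseudomanifold: a pseudomanifold all of whose
faces of codimension at least two have connected links -/
def IsNormal (K : SComplex V) (d : ℕ) : Prop :=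
  K.IsPseudomanifold d ∧ ∀ σ ∈ K.faces, σ.card + 1 ≤ d → (K.link σ).Connected

/-- the geometric realization of `K`, inside `V → ℝ` -/
def realization (K : SComplex V) [Fintype V] : Set (V → ℝ) :=
  {f | ∃ σ ∈ K.faces, (∀ v, v ∉ σ → f v = 0) ∧ (∀ v, 0 ≤ f v) ∧ (∑ v, f v) = 1}

end SComplex

/-- the standard 2-sphere -/
noncomputable def Sphere2 : Set (EuclideanSpace ℝ (Fin 3)) := Metric.sphere 0 1

/-- the real projective plane, as the quotient of the 2-sphere by the antipodal map -/
def RealProjPlane : Type :=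
  Quot fun a b : Sphere2 => (a : EuclideanSpace ℝ (Fin 3)) = -(b : EuclideanSpace ℝ (Fin 3))

noncomputable instance : TopologicalSpace RealProjPlane := by unfold RealProjPlane; infer_instance

noncomputable def UnitSquare : Set (ℝ × ℝ) := Set.Icc 0 1 ×ˢ Set.Icc 0 1

/-- the Möbius band, as a quotient of the unit square -/
def MobiusBand : Type :=
  Quot fun a b : UnitSquare =>
    (a : ℝ × ℝ).1 = 0 ∧ (b : ℝ × ℝ).1 = 1 ∧ (b : ℝ × ℝ).2 = 1 - (a : ℝ × ℝ).2

noncomputable instance : TopologicalSpace MobiusBand := by unfold MobiusBand; infer_instance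

noncomputable def ClosedDisc : Set (ℝ × ℝ) := Metric.closedBall 0 1

namespace SComplex

variable {V : Type} [DecidableEq V] [Fintype V]

/-- the carrier of `K` is a 2-sphere -/
def IsSphere2 (K : SComplex V) : Prop := Nonempty (K.realization ≃ₜ Sphere2)

/-- the carrier of `K` is a real projective plane -/
def IsRP2 (K : SComplex V) : Prop := Nonempty (K.realization ≃ₜ RealProjPlane)

/-- `K` is a triangulated Möbius strip -/
def IsMobius (K : SComplex V) : Prop := Nonempty (K.realization ≃ₜ MobiusBand)

/-- `K` is a triangulated disc -/
def IsDisc (K : SComplex V) : Prop := Nonempty (K.realization ≃ₜ ClosedDisc)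

end SComplex

namespace SComplex

variable {V : Type} [DecidableEq V]

/-- `K` is the boundary complex of a `(d+1)`-simplex: all proper nonempty subsets
of a set of `d+2` vertices. -/
def IsBoundarySimplex (K : SComplex V) (d : ℕ) : Prop :=
  ∃ W : Finset V, W.card = d + 2 ∧ K.faces = (W.powerset.erase W).erase ∅

/-- `Δ'` is obtained from the `d`-dimensional complex `Δ` by a single facet
subdivision: remove a facet `σ`, add a new vertex `w`, and add all faces
`w ⋆ τ` for proper faces `τ` of `σ`. -/
def FacetSubdivision (Δ Δ' : SComplex V) (d : ℕ) : Prop :=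
  ∃ σ ∈ Δ.faces, ∃ w : V, σ.card = d + 1 ∧ (∀ τ ∈ Δ.faces, w ∉ τ) ∧
    Δ'.faces = (Δ.faces.erase σ) ∪ (σ.powerset.erase σ).image (insert w)

/-- a stacked `d`-sphere: obtained from the boundary complex of a `(d+1)`-simplex
by a finite sequence of facet subdivisions. -/
def IsStackedSphere (K : SComplex V) (d : ℕ) : Prop :=
  ∃ K₀ : SComplex V, K₀.IsBoundarySimplex d ∧
    Relation.ReflTransGen (fun A B => FacetSubdivision A B d) K₀ K

end SComplex

/-- if `G(Δ) = G(st(t,Δ))` in a 3-dimensional normal pseudomanifold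
`Δ`, then for any vertex `v ≠ t` the complex `lk(v,Δ)` minus the open star of `t`
has no interior vertices: every vertex `x ≠ t` of `lk(v,Δ)` is adjacent to `t`
inside `lk(v,Δ)`. -/
theorem no_interior_vertex {V : Type} [DecidableEq V] (Δ : SComplex V) (t v : V)
    (hΔ : Δ.IsNormal 3)
    (hg : ∀ σ ∈ Δ.faces, σ.card ≤ 2 → σ ∈ (Δ.star t).faces)
    (hv : v ∈ Δ.vertices) (hvt : v ≠ t) :
    ∀ x ∈ (Δ.link {v}).vertices, x ≠ t → ({t, x} : Finset V) ∈ (Δ.link {v}).faces := by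
  intro x hx hxt
  -- x is a vertex of link {v}: some face τ of the link contains x
  obtain ⟨τ, hτ, hxτ⟩ := Finset.mem_sup.mp hx
  simp only [id] at hxτ
  -- {x} is a face of the link
  have hxf : ({x} : Finset V) ∈ (Δ.link {v}).faces :=
    (Δ.link {v}).down_closed τ hτ {x} (singleton_subset_iff.mpr hxτ) (singleton_nonempty x)
  rw [SComplex.link, mem_filter] at hxf
  obtain ⟨hx1, hx2, hx3⟩ := hxf
  -- v ≠ x
  have hvx : v ≠ x := by
    intro h; subst h
    simp at hx2
  -- {v, x} ∈ Δ.faces with card 2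
  have hvxf : ({v, x} : Finset V) ∈ Δ.faces := by
    simpa using hx3
  have hcard : ({v, x} : Finset V).card ≤ 2 := card_insert_le _ _ |>.trans (by simp)
  have hst := hg _ hvxf hcard
  rw [SComplex.star, mem_filter] at hst
  have htvx : insert t ({v, x} : Finset V) ∈ Δ.faces := hst.2
  -- conclude
  rw [SComplex.link, mem_filter]
  refine ⟨Δ.down_closed _ htvx {t, x} ?_ (insert_nonempty _ _), ?_, ?_⟩
  · intro a ha
    rcases Finset.mem_insert.mp ha with h | h
    · simp [h]
    · simp only [Finset.mem_singleton] at h; simp [h]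
  · ext a
    simp only [Finset.mem_inter, Finset.mem_singleton, Finset.mem_insert,
      Finset.notMem_empty, iff_false]
    rintro ⟨rfl, h | h⟩
    · exact hvt h
    · exact hvx (by simpa using h)
  · have : ({v} : Finset V) ∪ {t, x} = insert t ({v, x} : Finset V) := by
      ext a
      simp only [Finset.mem_union, Finset.mem_singleton, Finset.mem_insert]
      tauto
    rw [this]; exact htvx
end

section
/- Let Δ be a 3-dimensional normal pseudomanifold and v a vertex whose link lk(v, Δ) is the boundary of a 3-simplex σ = wxyz (so v has degree 4). If the tetrahedron σ is itself a face of Δ, then Δ is the boundary complex of the 4-simplex on vertices {v, w, x, y, z}. -/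
open Finset

/-- if a vertex `v` of a 3-dimensional normal pseudomanifold `Δ` has
link equal to the boundary of a tetrahedron `σ = wxyz`, and `σ` itself is a face
of `Δ`, then `Δ` is the boundary complex of the 4-simplex on `{v, w, x, y, z}`. -/
theorem boundary_four_simplex {V : Type} [DecidableEq V]
    (Δ : SComplex V) (v w x y z : V)
    (hΔ : Δ.IsNormal 3)
    (hcard : ({v, w, x, y, z} : Finset V).card = 5)
    (hlink : (Δ.link {v}).faces =
      ((({w, x, y, z} : Finset V).powerset.erase {w, x, y, z}).erase ∅))
    (hσ : ({w, x, y, z} : Finset V) ∈ Δ.faces) :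
    Δ.faces = ((({v, w, x, y, z} : Finset V).powerset.erase {v, w, x, y, z}).erase ∅) := by
  obtain ⟨⟨hpure, hridge, hsc⟩, _hnorm⟩ := hΔ
  set S : Finset V := {w, x, y, z} with hS
  set W : Finset V := {v, w, x, y, z} with hW
  have hWS : W = insert v S := rfl
  have hS4 : S.card ≤ 4 := by
    have h1 := Finset.card_insert_le w ({x, y, z} : Finset V)
    have h2 := Finset.card_insert_le x ({y, z} : Finset V)
    have h3 := Finset.card_insert_le y ({z} : Finset V)
    have h4 : ({z} : Finset V).card = 1 := Finset.card_singleton z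
    rw [hS]
    omega
  have hvS : v ∉ S := by
    intro hv
    rw [hWS, Finset.insert_eq_self.mpr hv] at hcard
    omega
  have hScard : S.card = 4 := by
    rw [hWS, Finset.card_insert_of_notMem hvS] at hcard
    omega
  have hWcard : W.card = 5 := hcard
  have hSW : S ⊆ W := by rw [hWS]; exact Finset.subset_insert _ _
  -- a proper nonempty subset of S, with v inserted, is a face
  have hlinkmem : ∀ τ : Finset V, τ ⊆ S → τ ≠ S → τ.Nonempty → insert v τ ∈ Δ.faces := by
    intro τ hsub hne hnonempty
    have hτ : τ ∈ (Δ.link {v}).faces := by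
      rw [hlink]
      simp only [Finset.mem_erase, Finset.mem_powerset]
      exact ⟨hnonempty.ne_empty, hne, hsub⟩
    simp only [SComplex.link, Finset.mem_filter] at hτ
    have h := hτ.2.2
    rwa [Finset.insert_eq]
  -- Lemma A: every 4-subset of W is a face
  have hA : ∀ a : Finset V, a ⊆ W → a.card = 4 → a ∈ Δ.faces := by
    intro a haW hacard
    by_cases hv : v ∈ a
    · have ha' : a.erase v ⊆ S := by
        intro u hu
        have h := haW (Finset.mem_of_mem_erase hu)
        rw [hWS, Finset.mem_insert] at h
        rcases h with h | h
        · exact absurd h (Finset.ne_of_mem_erase hu)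
        · exact h
      have hcard' : (a.erase v).card = 3 := by
        rw [Finset.card_erase_of_mem hv, hacard]
      have hne : a.erase v ≠ S := by
        intro h; rw [h, hScard] at hcard'; omega
      have hnon : (a.erase v).Nonempty := by
        rw [← Finset.card_pos, hcard']; omega
      have h := hlinkmem _ ha' hne hnon
      rwa [Finset.insert_erase hv] at h
    · have haS : a ⊆ S := by
        intro u hu
        have h := haW hu
        rw [hWS, Finset.mem_insert] at h
        rcases h with h | h
        · exact absurd (h ▸ hu) hv
        · exact h
      have : a = S := Finset.eq_of_subset_of_card_le haS (by omega)
      rwa [this]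
  -- Lemma B: any facet containing a triangle inside W is itself inside W
  have hB : ∀ t : Finset V, t ⊆ W → t.card = 3 →
      ∀ f ∈ Δ.faces, t ⊆ f → f.card = 4 → f ⊆ W := by
    intro t htW htcard f hf htf hfcard
    have hdiff : (W \ t).card = 2 := by
      rw [Finset.card_sdiff_of_subset htW, hWcard, htcard]
    obtain ⟨p, q, hpq, hWt⟩ := Finset.card_eq_two.mp hdiff
    have hp : p ∈ W \ t := by rw [hWt]; simp
    have hq : q ∈ W \ t := by rw [hWt]; simp
    obtain ⟨hpW, hpt⟩ := Finset.mem_sdiff.mp hp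
    obtain ⟨hqW, hqt⟩ := Finset.mem_sdiff.mp hq
    have h1 : insert p t ∈ Δ.faces := hA _ (Finset.insert_subset hpW htW)
      (by rw [Finset.card_insert_of_notMem hpt, htcard])
    have h2 : insert q t ∈ Δ.faces := hA _ (Finset.insert_subset hqW htW)
      (by rw [Finset.card_insert_of_notMem hqt, htcard])
    have htfaces : t ∈ Δ.faces :=
      Δ.down_closed _ h1 t (Finset.subset_insert _ _)
        (by rw [← Finset.card_pos, htcard]; omega)
    have hfilter := hridge t htfaces htcard
    obtain ⟨a, b, hab, hset⟩ := Finset.card_eq_two.mp hfilter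
    have hm1 : insert p t ∈ Δ.faces.filter fun τ => t ⊆ τ ∧ τ.card = 3 + 1 := by
      rw [Finset.mem_filter]
      exact ⟨h1, Finset.subset_insert _ _,
        by rw [Finset.card_insert_of_notMem hpt, htcard]⟩
    have hm2 : insert q t ∈ Δ.faces.filter fun τ => t ⊆ τ ∧ τ.card = 3 + 1 := by
      rw [Finset.mem_filter]
      exact ⟨h2, Finset.subset_insert _ _,
        by rw [Finset.card_insert_of_notMem hqt, htcard]⟩
    have hmf : f ∈ Δ.faces.filter fun τ => t ⊆ τ ∧ τ.card = 3 + 1 := by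
      rw [Finset.mem_filter]
      exact ⟨hf, htf, hfcard⟩
    have hne12 : insert p t ≠ insert q t := by
      intro h
      have : p ∈ insert q t := h ▸ Finset.mem_insert_self p t
      rcases Finset.mem_insert.mp this with h' | h'
      · exact hpq h'
      · exact hpt h'
    rw [hset, Finset.mem_insert, Finset.mem_singleton] at hm1 hm2 hmf
    have hfval : f = insert p t ∨ f = insert q t := by
      rcases hm1 with h1' | h1' <;> rcases hm2 with h2' | h2' <;>
        rcases hmf with hf' | hf' <;> first
        | (left; rw [hf', ← h1'])
        | (right; rw [hf', ← h2'])
        | (exact absurd (h1'.trans h2'.symm) hne12)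
    rcases hfval with h | h <;> rw [h]
    · exact Finset.insert_subset hpW htW
    · exact Finset.insert_subset hqW htW
  -- every facet is contained in W, by strong connectivity from S
  have hfacetW : ∀ f ∈ Δ.faces, f.card = 4 → f ⊆ W := by
    intro f hf hfcard
    have hchain := hsc f hf S hσ hfcard hScard
    clear hf hfcard
    induction hchain using Relation.ReflTransGen.head_induction_on with
    | refl => exact hSW
    | head hac _ ih =>
      obtain ⟨haf, hcf, hacard, hccard, hcap⟩ := hac
      exact hB _ (Finset.inter_subset_right.trans ih) hcap _ haf
        Finset.inter_subset_left hacard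
  -- assemble
  ext a
  simp only [Finset.mem_erase, Finset.mem_powerset]
  constructor
  · intro ha
    obtain ⟨f, hf, haf, hfcard⟩ := hpure a ha
    have hfW := hfacetW f hf hfcard
    have haW : a ⊆ W := haf.trans hfW
    refine ⟨(Δ.nonempty_of_mem a ha).ne_empty, ?_, haW⟩
    intro h
    have h1 : a.card ≤ 4 := by
      have := Finset.card_le_card haf
      omega
    rw [h, hWcard] at h1
    omega
  · rintro ⟨hne, hneq, hsub⟩
    have hlt : a.card < 5 := by
      rw [← hWcard]
      exact Finset.card_lt_card (lt_of_le_of_ne hsub hneq)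
    obtain ⟨b, hab, hbW, hbcard⟩ :=
      Finset.exists_subsuperset_card_eq hsub (by omega : a.card ≤ 4)
        (by omega : 4 ≤ W.card)
    exact Δ.down_closed b (hA b hbW hbcard) a hab
      (Finset.nonempty_iff_ne_empty.mpr hne)
end
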